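/- For every n ∈ ℕ and every z ∈ ℕ with 0 ≤ z < 2^n, the modulus of the complex number Σ_{x=0}^{2^n-1} i^{w(x)} (-1)^{z·x} equals 2^{n/2} = √(2^n). -/

import Mathlib

/-!
Splitting `range (2^(n+1))` into `x` and `2^n + x` with `x < 2^n` adds one to the Hamming
weight and the bit `z_n` to the dot product, so the sum satisfies
`S_{n+1} = S_n · (1 + i (-1)^{z_n})`. Each factor `1 ± i` has modulus `√2`.
-/

open Finset

/-- Hamming weight of a natural number: number of 1s in its binary representation. -/
def hw (x : ℕ) : ℕ := (Nat.digits 2 x).sum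

/-- The `j`-th bit of `z`, as a natural number in `{0,1}`. -/
def nbit (z j : ℕ) : ℕ := if z.testBit j then 1 else 0

/-- Partial bitwise dot product `∑_{j=0}^{n-1} z_j x_j`. -/
def ndot (n z x : ℕ) : ℕ := ∑ j ∈ Finset.range n, nbit z j * nbit x j

open Complex

lemma hw_eq_mod_two_add_hw_div_two (x : ℕ) : hw x = x % 2 + hw (x / 2) := by
  rcases Nat.eq_zero_or_pos x with rfl | hx
  · simp [hw]
  · simp [hw, Nat.digits_def' (by norm_num : 1 < 2) hx]

lemma nbit_zero (x : ℕ) : nbit x 0 = x % 2 := by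
  rcases Nat.mod_two_eq_zero_or_one x with h | h <;> simp [nbit, Nat.testBit_zero, h]

lemma nbit_succ (x j : ℕ) : nbit x (j + 1) = nbit (x / 2) j := by
  simp [nbit, Nat.testBit_add_one]

lemma hw_eq_sum_nbit {n x : ℕ} (hx : x < 2 ^ n) : hw x = ∑ j ∈ range n, nbit x j := by
  induction n generalizing x with
  | zero =>
    obtain rfl : x = 0 := by omega
    simp [hw]
  | succ n ih =>
    rw [sum_range_succ', hw_eq_mod_two_add_hw_div_two, ih (by omega), nbit_zero]
    simp only [nbit_succ, add_comm]

lemma nbit_of_lt_two_pow {n x : ℕ} (hx : x < 2 ^ n) : nbit x n = 0 := by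
  simp [nbit, Nat.testBit_lt_two_pow hx]

lemma nbit_two_pow_add_self {n x : ℕ} (hx : x < 2 ^ n) : nbit (2 ^ n + x) n = 1 := by
  simp [nbit, Nat.testBit_two_pow_add_eq, Nat.testBit_lt_two_pow hx]

lemma nbit_two_pow_add_of_lt {n x j : ℕ} (hj : j < n) : nbit (2 ^ n + x) j = nbit x j := by
  simp [nbit, Nat.testBit_two_pow_add_gt hj]

lemma sum_nbit_two_pow_add (n x : ℕ) (f : ℕ → ℕ → ℕ) :
    ∑ j ∈ range n, f j (nbit (2 ^ n + x) j) = ∑ j ∈ range n, f j (nbit x j) :=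
  sum_congr rfl fun j hj => by rw [nbit_two_pow_add_of_lt (mem_range.mp hj)]

lemma hw_two_pow_add {n x : ℕ} (hx : x < 2 ^ n) : hw (2 ^ n + x) = hw x + 1 := by
  rw [hw_eq_sum_nbit (show 2 ^ n + x < 2 ^ (n + 1) by omega), hw_eq_sum_nbit hx,
    sum_range_succ, nbit_two_pow_add_self hx, sum_nbit_two_pow_add n x (fun _ b => b)]

lemma ndot_succ_of_lt {n z x : ℕ} (hx : x < 2 ^ n) : ndot (n + 1) z x = ndot n z x := by
  rw [ndot, sum_range_succ, nbit_of_lt_two_pow hx, mul_zero, add_zero, ndot]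

lemma ndot_succ_two_pow_add {n x : ℕ} (z : ℕ) (hx : x < 2 ^ n) :
    ndot (n + 1) z (2 ^ n + x) = ndot n z x + nbit z n := by
  rw [ndot, sum_range_succ, nbit_two_pow_add_self hx, mul_one,
    sum_nbit_two_pow_add n x (fun j b => nbit z j * b), ndot]

lemma sum_range_two_pow_succ {M : Type*} [AddCommMonoid M] (n : ℕ) (f : ℕ → M) :
    ∑ x ∈ range (2 ^ (n + 1)), f x = ∑ x ∈ range (2 ^ n), (f x + f (2 ^ n + x)) := by
  rw [pow_succ, mul_two, sum_range_add, sum_add_distrib]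

lemma sum_I_pow_hw_succ (n z : ℕ) :
    ∑ x ∈ range (2 ^ (n + 1)), I ^ hw x * (-1) ^ ndot (n + 1) z x =
      (∑ x ∈ range (2 ^ n), I ^ hw x * (-1) ^ ndot n z x) * (1 + I * (-1) ^ nbit z n) := by
  rw [sum_range_two_pow_succ, sum_mul]
  refine sum_congr rfl fun x hx => ?_
  have hx : x < 2 ^ n := mem_range.mp hx
  rw [ndot_succ_of_lt hx, hw_two_pow_add hx, ndot_succ_two_pow_add z hx, pow_succ, pow_add]
  ring

lemma norm_one_add_I_mul_neg_one_pow (k : ℕ) : ‖1 + I * (-1) ^ k‖ = √2 := by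
  rcases neg_one_pow_eq_or ℂ k with h | h <;>
    simp [h, ← sub_eq_add_neg, norm_def, normSq_apply, one_add_one_eq_two]

theorem stmt_5_general (n : ℕ) (z : ℕ) :
    ‖∑ x ∈ Finset.range (2 ^ n), Complex.I ^ hw x * (-1) ^ ndot n z x‖ =
      Real.sqrt (2 ^ n) := by
  induction n with
  | zero => simp [hw, ndot]
  | succ n ih =>
    rw [sum_I_pow_hw_succ, norm_mul, ih, norm_one_add_I_mul_neg_one_pow,
      ← Real.sqrt_mul (by positivity), pow_succ]

theorem stmt_5 (n : ℕ) (z : ℕ) (hz : z < 2 ^ n) :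
    ‖∑ x ∈ Finset.range (2 ^ n), Complex.I ^ hw x * (-1) ^ ndot n z x‖ =
      Real.sqrt (2 ^ n) :=
  stmt_5_general n z
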